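/- A word w in the right-angled Artin group A(Γ) is reduced (i.e., of minimal length among all words representing the same element) if and only if w does not contain a subword of the form v^ε x v^{-ε}, where v is a vertex of Γ, ε ∈ {1,-1}, and x is a word all of whose letters commute with v in A(Γ). -/

import Mathlib

namespace Paper

variable {V : Type*}

/-- Relators of the right-angled Artin group: commutators of adjacent vertices. -/
def raagRels (G : SimpleGraph V) : Set (FreeGroup V) :=
  {r | ∃ u v : V, G.Adj u v ∧
    r = FreeGroup.of u * FreeGroup.of v * (FreeGroup.of u)⁻¹ * (FreeGroup.of v)⁻¹}

/-- The right-angled Artin group on a simple graph. -/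
def RAAG (G : SimpleGraph V) : Type _ :=
  PresentedGroup (raagRels G)

instance (G : SimpleGraph V) : Group (RAAG G) :=
  inferInstanceAs (Group (PresentedGroup (raagRels G)))

/-- The generator of `RAAG G` corresponding to a vertex. -/
def raagOf (G : SimpleGraph V) (v : V) : RAAG G :=
  PresentedGroup.of v

/-- Evaluation of a word (a list of letters, each a vertex with a sign) in `RAAG G`. -/
def raagWord (G : SimpleGraph V) (w : List (V × Bool)) : RAAG G :=
  (w.map fun p => if p.2 then raagOf G p.1 else (raagOf G p.1)⁻¹).prod

/-- A word is reduced if any word representing the same element is at least as long. -/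
def IsReducedWord (G : SimpleGraph V) (w : List (V × Bool)) : Prop :=
  ∀ w' : List (V × Bool), raagWord G w' = raagWord G w → w.length ≤ w'.length

/-- Word length of an element of `RAAG G` with respect to the vertex generating set. -/
noncomputable def raagLength (G : SimpleGraph V) (g : RAAG G) : ℕ :=
  sInf {n | ∃ w : List (V × Bool), raagWord G w = g ∧ w.length = n}

section Comb

variable (G : SimpleGraph V)

/-- Formal inverse of a letter. -/
def inv1 (a : V × Bool) : V × Bool := (a.1, !a.2)

/-- Two letters commute at the graph level: same vertex or adjacent vertices. -/
def Cmm (a b : V × Bool) : Prop := a.1 = b.1 ∨ G.Adj a.1 b.1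

/-- Swap two adjacent graph-commuting letters. -/
def SwapS (w w' : List (V × Bool)) : Prop :=
  ∃ x a b y, Cmm G a b ∧ w = x ++ [a, b] ++ y ∧ w' = x ++ [b, a] ++ y

/-- Delete a pattern `a m a⁻¹` where all letters of `m` graph-commute with `a`. -/
def DelS (w d : List (V × Bool)) : Prop :=
  ∃ x a m y, (∀ p ∈ m, Cmm G a p) ∧ w = x ++ [a] ++ m ++ [inv1 a] ++ y ∧ d = x ++ m ++ y

/-- Shuffle equivalence. -/
def Shuf : List (V × Bool) → List (V × Bool) → Prop := Relation.ReflTransGen (SwapS G)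

/-- One elementary move. -/
def MStep (w w' : List (V × Bool)) : Prop := SwapS G w w' ∨ DelS G w w' ∨ DelS G w' w

/-- Equivalence generated by elementary moves. -/
def Moves : List (V × Bool) → List (V × Bool) → Prop := Relation.EqvGen (MStep G)

variable {G}

@[simp] lemma inv1_inv1 (a : V × Bool) : inv1 (inv1 a) = a := by simp [inv1]

@[simp] lemma inv1_fst (a : V × Bool) : (inv1 a).1 = a.1 := rfl

lemma cmm_symm {a b : V × Bool} (h : Cmm G a b) : Cmm G b a := by
  rcases h with h | h
  · exact Or.inl h.symm
  · exact Or.inr h.symm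

lemma cmm_congr_left {a a' b : V × Bool} (h : a.1 = a'.1) (hc : Cmm G a b) : Cmm G a' b := by
  rcases hc with hc | hc
  · exact Or.inl (h ▸ hc)
  · exact Or.inr (h ▸ hc)

lemma cmm_congr_right {a b b' : V × Bool} (h : b.1 = b'.1) (hc : Cmm G a b) : Cmm G a b' := by
  rcases hc with hc | hc
  · exact Or.inl (h ▸ hc)
  · exact Or.inr (h ▸ hc)

lemma swapS_symm {w w' : List (V × Bool)} (h : SwapS G w w') : SwapS G w' w := by
  obtain ⟨x, a, b, y, hc, h1, h2⟩ := h
  exact ⟨x, b, a, y, cmm_symm hc, h2, h1⟩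

lemma shuf_refl (w : List (V × Bool)) : Shuf G w w := Relation.ReflTransGen.refl

lemma shuf_trans {a b c : List (V × Bool)} (h1 : Shuf G a b) (h2 : Shuf G b c) : Shuf G a c :=
  Relation.ReflTransGen.trans h1 h2

lemma shuf_symm {a b : List (V × Bool)} (h : Shuf G a b) : Shuf G b a :=
  have : Std.Symm (SwapS G) := ⟨fun _ _ => swapS_symm⟩
  @Std.Symm.symm _ (Relation.ReflTransGen (SwapS G)) inferInstance _ _ h

lemma swapS_length {w w' : List (V × Bool)} (h : SwapS G w w') : w.length = w'.length := by
  obtain ⟨x, a, b, y, _, rfl, rfl⟩ := h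
  simp

lemma shuf_length {w w' : List (V × Bool)} (h : Shuf G w w') : w.length = w'.length := by
  induction h with
  | refl => rfl
  | tail _ h ih => exact ih.trans (swapS_length h)

lemma delS_length {w d : List (V × Bool)} (h : DelS G w d) : d.length + 2 = w.length := by
  obtain ⟨x, a, m, y, _, rfl, rfl⟩ := h
  simp; omega

lemma swapS_of_shuf_single {x y : List (V × Bool)} {a b : V × Bool} (hc : Cmm G a b) :
    Shuf G (x ++ [a, b] ++ y) (x ++ [b, a] ++ y) :=
  Relation.ReflTransGen.single ⟨x, a, b, y, hc, rfl, rfl⟩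

/-- Shuffle a letter to the right through a block of letters commuting with it. -/
lemma shuffle_through {m : List (V × Bool)} {a : V × Bool} (hc : ∀ p ∈ m, Cmm G a p) :
    ∀ x y : List (V × Bool), Shuf G (x ++ [a] ++ m ++ y) (x ++ m ++ [a] ++ y) := by
  induction m with
  | nil => intro x y; simp; exact shuf_refl _
  | cons q m ih =>
    intro x y
    have h1 : Shuf G (x ++ [a, q] ++ (m ++ y)) (x ++ [q, a] ++ (m ++ y)) :=
      swapS_of_shuf_single (hc q (by simp))
    have h2 := ih (fun p hp => hc p (by simp [hp])) (x ++ [q]) y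
    have e1 : x ++ [a] ++ (q :: m) ++ y = x ++ [a, q] ++ (m ++ y) := by simp
    have e2 : x ++ [q, a] ++ (m ++ y) = (x ++ [q]) ++ [a] ++ m ++ y := by simp
    have e3 : (x ++ [q]) ++ m ++ [a] ++ y = x ++ (q :: m) ++ [a] ++ y := by simp
    rw [e1, ← e3]
    exact shuf_trans (e2 ▸ h1) h2

lemma split1 {α : Type*} {x y s t : List α} {a b : α}
    (h : x ++ [a] ++ y = s ++ [b] ++ t) :
    (∃ u, x = s ++ [b] ++ u ∧ t = u ++ [a] ++ y) ∨
    (x = s ∧ a = b ∧ y = t) ∨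
    (∃ u, s = x ++ [a] ++ u ∧ y = u ++ [b] ++ t) := by
  have h' : x ++ (a :: y) = s ++ (b :: t) := by simpa using h
  rcases List.append_eq_append_iff.mp h' with ⟨u, hu1, hu2⟩ | ⟨u, hu1, hu2⟩
  · cases u with
    | nil => simp at hu1 hu2; exact Or.inr (Or.inl ⟨hu1.symm, hu2.1, hu2.2⟩)
    | cons h0 u =>
      simp at hu2; obtain ⟨rfl, rfl⟩ := hu2
      exact Or.inr (Or.inr ⟨u, by simpa using hu1, by simp⟩)
  · cases u with
    | nil => simp at hu1 hu2; exact Or.inr (Or.inl ⟨hu1, hu2.1.symm, hu2.2.symm⟩)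
    | cons h0 u =>
      simp at hu2; obtain ⟨rfl, rfl⟩ := hu2
      exact Or.inl ⟨u, by simpa using hu1, by simp⟩

/-- Transfer a pattern-deletion across a single swap. -/
lemma l4single {w w' d' : List (V × Bool)} (hs : SwapS G w w') (hd : DelS G w' d') :
    ∃ d, DelS G w d ∧ Shuf G d d' := by
  obtain ⟨x, c, e, y, hce, rfl, hw'⟩ := hs
  obtain ⟨s, q, m, t, hm, hw'2, rfl⟩ := hd
  rw [hw'] at hw'2; clear hw'
  have heq : x ++ [e] ++ ([c] ++ y) = s ++ [q] ++ (m ++ [inv1 q] ++ t) := by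
    simpa [List.append_assoc] using hw'2
  rcases split1 heq with ⟨u, hx, hrest⟩ | ⟨rfl, rfl, hrest⟩ | ⟨u, hs', hrest⟩
  · -- q strictly left of e : x = s ++ [q] ++ u
    subst hx
    have heq2 : m ++ [inv1 q] ++ t = u ++ [e] ++ ([c] ++ y) := hrest
    rcases split1 heq2 with ⟨u2, hm', hrest2⟩ | ⟨rfl, rfl, rfl⟩ | ⟨u2, hu', hrest2⟩
    · -- e inside m : m = u ++ [e] ++ u2
      subst hm'
      cases u2 with
      | nil =>
        -- c = inv1 q, y = t
        simp only [List.nil_append, List.cons.injEq] at hrest2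
        obtain ⟨rfl, rfl⟩ := hrest2
        refine ⟨s ++ u ++ ([e] ++ y), ⟨s, q, u, [e] ++ y,
          fun p hp => hm p (by simp [hp]), by simp, by simp⟩, ?_⟩
        simp; exact shuf_refl _
      | cons c0 u3 =>
        simp only [List.cons_append, List.cons.injEq, List.nil_append] at hrest2
        obtain ⟨rfl, rfl⟩ := hrest2
        refine ⟨s ++ (u ++ [c, e] ++ u3) ++ t, ⟨s, q, u ++ [c, e] ++ u3, t,
          fun p hp => by
            simp only [List.mem_append, List.mem_cons] at hp
            rcases hp with (hp | rfl | rfl | h) | hp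
            · exact hm p (by simp [hp])
            · exact hm p (by simp)
            · exact hm p (by simp)
            · simp at h
            · exact hm p (by simp [hp]),
          by simp, rfl⟩, ?_⟩
        have : Shuf G ((s ++ u) ++ [c, e] ++ (u3 ++ t)) ((s ++ u) ++ [e, c] ++ (u3 ++ t)) :=
          swapS_of_shuf_single hce
        simpa [List.append_assoc] using this
    · -- e = inv1 q, t = [c] ++ y
      refine ⟨s ++ (m ++ [c]) ++ y, ⟨s, q, m ++ [c], y,
        fun p hp => by
          simp only [List.mem_append, List.mem_singleton] at hp
          rcases hp with hp | rfl
          · exact hm p hp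
          · exact cmm_symm (cmm_congr_right (by simp) hce),
        by simp, rfl⟩, ?_⟩
      simp; exact shuf_refl _
    · -- pattern entirely left of the swapped pair : u = m ++ [inv1 q] ++ u2
      subst hu'
      refine ⟨s ++ m ++ (u2 ++ [c, e] ++ y), ⟨s, q, m, u2 ++ [c, e] ++ y, hm,
        by simp, by simp⟩, ?_⟩
      have h2 : t = u2 ++ [e] ++ ([c] ++ y) := hrest2
      subst h2
      have : Shuf G ((s ++ m ++ u2) ++ [c, e] ++ y) ((s ++ m ++ u2) ++ [e, c] ++ y) :=
        swapS_of_shuf_single hce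
      simpa [List.append_assoc] using this
  · -- e = q (x = s, e = q substituted)
    cases m with
    | nil =>
      simp only [List.nil_append, List.cons.injEq] at hrest
      obtain ⟨rfl, rfl⟩ := hrest
      refine ⟨x ++ y, ⟨x, inv1 e, [], y, by simp, by simp, by simp⟩, ?_⟩
      simp; exact shuf_refl _
    | cons c0 m2 =>
      simp only [List.cons_append, List.cons.injEq, List.nil_append] at hrest
      obtain ⟨rfl, rfl⟩ := hrest
      refine ⟨(x ++ [c]) ++ m2 ++ t, ⟨x ++ [c], e, m2, t,
        fun p hp => hm p (by simp [hp]), by simp, rfl⟩, ?_⟩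
      simp; exact shuf_refl _
  · -- e strictly left of q : s = x ++ [e] ++ u
    subst hs'
    cases u with
    | nil =>
      -- c = q
      simp only [List.nil_append, List.cons.injEq] at hrest
      obtain ⟨rfl, rfl⟩ := hrest
      refine ⟨x ++ (e :: m) ++ t, ⟨x, c, e :: m, t,
        fun p hp => by
          rcases List.mem_cons.mp hp with rfl | hp
          · exact hce
          · exact hm p hp,
        by simp, rfl⟩, ?_⟩
      simp; exact shuf_refl _
    | cons c0 u2 =>
      simp only [List.cons_append, List.cons.injEq, List.nil_append] at hrest
      obtain ⟨rfl, rfl⟩ := hrest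
      refine ⟨x ++ [c, e] ++ u2 ++ m ++ t, ⟨x ++ [c, e] ++ u2, q, m, t, hm,
        by simp, by simp⟩, ?_⟩
      have : Shuf G (x ++ [c, e] ++ (u2 ++ m ++ t)) (x ++ [e, c] ++ (u2 ++ m ++ t)) :=
        swapS_of_shuf_single hce
      simpa [List.append_assoc] using this



/-- Critical pair: an adjacent cancelling pair versus a pattern in the same word. -/
lemma p1core {u v s t m : List (V × Bool)} {p q : V × Bool}
    (hm : ∀ r ∈ m, Cmm G q r)
    (heq : u ++ [p] ++ ([inv1 p] ++ v) = s ++ [q] ++ (m ++ [inv1 q] ++ t)) :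
    ∃ d d', Relation.ReflTransGen (DelS G) (u ++ v) d ∧
      Relation.ReflTransGen (DelS G) (s ++ m ++ t) d' ∧ Shuf G d d' := by
  rcases split1 heq with ⟨w1, hu, hrest⟩ | ⟨rfl, rfl, hrest⟩ | ⟨w1, hs', hrest⟩
  · -- q strictly left of p : u = s ++ [q] ++ w1
    subst hu
    rcases split1 hrest with ⟨w2, hm', hrest2⟩ | ⟨rfl, hqp, rfl⟩ | ⟨w2, hw1, hrest2⟩
    · -- p inside m : m = w1 ++ [p] ++ w2
      subst hm'
      cases w2 with
      | nil =>
        have h2 : (inv1 p) :: v = (inv1 q) :: t := by simpa using hrest2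
        have hpq : inv1 p = inv1 q := (List.cons.inj h2).1
        have hvt : v = t := (List.cons.inj h2).2
        subst hvt
        have hpq' : p = q := by
          have := congrArg inv1 hpq; simpa using this
        subst hpq'
        refine ⟨_, _, Relation.ReflTransGen.refl, Relation.ReflTransGen.refl, ?_⟩
        have := shuffle_through (G := G) (m := w1) (a := p)
          (fun r hr => hm r (by simp [hr])) s v
        simpa [List.append_assoc] using this
      | cons h0 w3 =>
        simp only [List.cons_append, List.cons.injEq, List.nil_append] at hrest2
        obtain ⟨rfl, rfl⟩ := hrest2
        refine ⟨(s ++ (w1 ++ w3)) ++ t, ((s ++ w1)) ++ (w3 ++ t), ?_, ?_, ?_⟩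
        · exact Relation.ReflTransGen.single ⟨s, q, w1 ++ w3, t,
            fun r hr => by
              rcases List.mem_append.mp hr with hr | hr
              · exact hm r (by simp [hr])
              · exact hm r (by simp [hr]),
            by simp, by simp⟩
        · exact Relation.ReflTransGen.single ⟨s ++ w1, p, [], w3 ++ t,
            by simp, by simp, by simp⟩
        · have : (s ++ (w1 ++ w3)) ++ t = (s ++ w1) ++ (w3 ++ t) := by simp
          rw [this]; exact shuf_refl _
    · -- p = inv1 q at the closing position
      have hq : inv1 p = q := by
        have := congrArg inv1 hqp; simpa using this.symm
      refine ⟨_, _, Relation.ReflTransGen.refl, Relation.ReflTransGen.refl, ?_⟩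
      rw [hq]
      have := shuffle_through (G := G) (m := m) (a := q) hm s v
      simpa [List.append_assoc] using this
    · -- pattern entirely inside u : w1 = m ++ [inv1 q] ++ w2
      subst hw1
      refine ⟨s ++ m ++ (w2 ++ v), (s ++ m ++ w2) ++ v, ?_, ?_, ?_⟩
      · exact Relation.ReflTransGen.single ⟨s, q, m, w2 ++ v, hm, by simp, by simp⟩
      · rw [hrest2]
        exact Relation.ReflTransGen.single ⟨s ++ m ++ w2, p, [], v, by simp,
          by simp, by simp⟩
      · have : s ++ m ++ (w2 ++ v) = (s ++ m ++ w2) ++ v := by simp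
        rw [this]; exact shuf_refl _
  · -- p = q at the opening position
    cases m with
    | nil =>
      simp only [List.nil_append, List.cons.injEq] at hrest
      obtain ⟨-, rfl⟩ := hrest
      refine ⟨u ++ v, u ++ [] ++ v, Relation.ReflTransGen.refl,
        Relation.ReflTransGen.refl, ?_⟩
      simp; exact shuf_refl _
    | cons h0 m2 =>
      simp only [List.cons_append, List.cons.injEq, List.nil_append] at hrest
      obtain ⟨rfl, rfl⟩ := hrest
      refine ⟨_, _, Relation.ReflTransGen.refl, Relation.ReflTransGen.refl, ?_⟩
      refine shuf_symm ?_
      have := shuffle_through (G := G) (m := m2) (a := inv1 p)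
        (fun r hr => cmm_congr_left (by simp) (hm r (by simp [hr]))) u t
      simpa [List.append_assoc] using this
  · -- p strictly left of q : s = u ++ [p] ++ w1
    subst hs'
    cases w1 with
    | nil =>
      simp only [List.nil_append, List.cons.injEq] at hrest
      obtain ⟨rfl, rfl⟩ := hrest
      refine ⟨_, _, Relation.ReflTransGen.refl, Relation.ReflTransGen.refl, ?_⟩
      refine shuf_symm ?_
      have hq : inv1 (inv1 p) = p := by simp
      have := shuffle_through (G := G) (m := m) (a := p)
        (fun r hr => cmm_congr_left (by simp) (hm r hr)) u t
      rw [hq]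
      simpa [List.append_assoc] using this
    | cons h0 w2 =>
      simp only [List.cons_append, List.cons.injEq, List.nil_append] at hrest
      obtain ⟨rfl, rfl⟩ := hrest
      refine ⟨(u ++ w2) ++ m ++ t, u ++ (w2 ++ m ++ t), ?_, ?_, ?_⟩
      · exact Relation.ReflTransGen.single ⟨u ++ w2, q, m, t, hm, by simp, by simp⟩
      · exact Relation.ReflTransGen.single ⟨u, p, [], w2 ++ m ++ t, by simp,
          by simp, by simp⟩
      · have : (u ++ w2) ++ m ++ t = u ++ (w2 ++ m ++ t) := by simp
        rw [this]; exact shuf_refl _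

/-- No pattern deletion applies. -/
def NoPatW (G : SimpleGraph V) (w : List (V × Bool)) : Prop := ∀ d, ¬ DelS G w d

lemma l4 {w w' d' : List (V × Bool)} (hs : Shuf G w w') (hd : DelS G w' d') :
    ∃ d, DelS G w d ∧ Shuf G d d' := by
  induction hs using Relation.ReflTransGen.head_induction_on with
  | refl => exact ⟨d', hd, shuf_refl _⟩
  | head hstep _ ih =>
    obtain ⟨d1, hd1, hsh1⟩ := ih
    obtain ⟨d0, hd0, hsh0⟩ := l4single hstep hd1
    exact ⟨d0, hd0, shuf_trans hsh0 hsh1⟩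

lemma noPat_shuf {w w' : List (V × Bool)} (hs : Shuf G w w') (h : NoPatW G w) :
    NoPatW G w' :=
  fun d hd => (h _ (l4 hs hd).choose_spec.1).elim

lemma l4star {w' n' : List (V × Bool)} (hd : Relation.ReflTransGen (DelS G) w' n') :
    ∀ w, Shuf G w w' → ∃ n, Relation.ReflTransGen (DelS G) w n ∧ Shuf G n n' := by
  induction hd using Relation.ReflTransGen.head_induction_on with
  | refl => exact fun w hw => ⟨w, Relation.ReflTransGen.refl, hw⟩
  | head hstep _ ih =>
    intro w hw
    obtain ⟨d, hd0, hsh⟩ := l4 hw hstep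
    obtain ⟨n, hn, hnn⟩ := ih d hsh
    exact ⟨n, Relation.ReflTransGen.head hd0 hn, hnn⟩

lemma exists_normal (w : List (V × Bool)) :
    ∃ n, Relation.ReflTransGen (DelS G) w n ∧ NoPatW G n := by
  by_cases h : ∃ d, DelS G w d
  · obtain ⟨d, hd⟩ := h
    have hlen : d.length < w.length := by have := delS_length hd; omega
    obtain ⟨n, hn, hnp⟩ := exists_normal d
    exact ⟨n, Relation.ReflTransGen.head hd hn, hnp⟩
  · exact ⟨w, Relation.ReflTransGen.refl, fun d hd => h ⟨d, hd⟩⟩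
termination_by w.length

lemma del_split {a b : List (V × Bool)} (h : DelS G a b) :
    ∃ u p v, Shuf G a (u ++ [p] ++ ([inv1 p] ++ v)) ∧ b = u ++ v := by
  obtain ⟨x, p, m, y, hm, rfl, rfl⟩ := h
  refine ⟨x ++ m, p, y, ?_, by simp⟩
  have := shuffle_through hm x ([inv1 p] ++ y)
  simpa [List.append_assoc] using this

lemma p1 {a b c : List (V × Bool)} (h1 : DelS G a b) (h2 : DelS G a c) :
    ∃ d d', Relation.ReflTransGen (DelS G) b d ∧ Relation.ReflTransGen (DelS G) c d' ∧
      Shuf G d d' := by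
  obtain ⟨u, p, v, hsh, rfl⟩ := del_split h1
  obtain ⟨c1, hc1, hshc⟩ := l4 (shuf_symm hsh) h2
  obtain ⟨s, q, m, t, hm, he, rfl⟩ := hc1
  have he' : u ++ [p] ++ ([inv1 p] ++ v) = s ++ [q] ++ (m ++ [inv1 q] ++ t) := by
    simpa [List.append_assoc] using he
  obtain ⟨d, d', hd, hd', hdd⟩ := p1core hm he'
  obtain ⟨d'', hd'', hsh''⟩ := l4star hd' c (shuf_symm hshc)
  exact ⟨d, d'', hd, hd'', shuf_trans hdd (shuf_symm hsh'')⟩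

lemma unf {b n1 n2 : List (V × Bool)} (h1 : Relation.ReflTransGen (DelS G) b n1)
    (hp1 : NoPatW G n1) (h2 : Relation.ReflTransGen (DelS G) b n2) (hp2 : NoPatW G n2) :
    Shuf G n1 n2 := by
  rcases Relation.ReflTransGen.cases_head h1 with rfl | ⟨b1, hb1, h1'⟩
  · rcases Relation.ReflTransGen.cases_head h2 with rfl | ⟨b2, hb2, h2'⟩
    · exact shuf_refl _
    · exact absurd hb2 (hp1 b2)
  · rcases Relation.ReflTransGen.cases_head h2 with rfl | ⟨b2, hb2, h2'⟩
    · exact absurd hb1 (hp2 b1)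
    · have hlen1 : b1.length < b.length := by have := delS_length hb1; omega
      have hlen2 : b2.length < b.length := by have := delS_length hb2; omega
      obtain ⟨d1, d2, hd1, hd2, hdd⟩ := p1 hb1 hb2
      obtain ⟨m1, hm1, hmp1⟩ := exists_normal d1
      have key1 : Shuf G n1 m1 := unf h1' hp1 (hd1.trans hm1) hmp1
      obtain ⟨m2, hm2rtg, hm2sh⟩ := l4star hm1 d2 (shuf_symm hdd)
      have hmp2 : NoPatW G m2 := noPat_shuf (shuf_symm hm2sh) hmp1
      have key2 : Shuf G n2 m2 := unf h2' hp2 (hd2.trans hm2rtg) hmp2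
      exact shuf_trans key1 (shuf_trans (shuf_symm hm2sh) (shuf_symm key2))
termination_by b.length

lemma rtg_del_length {w n : List (V × Bool)} (h : Relation.ReflTransGen (DelS G) w n) :
    n.length ≤ w.length := by
  induction h with
  | refl => exact le_refl _
  | tail _ h ih => have := delS_length h; omega

/-- `Moves`-related words have joinable normal forms. -/
lemma moves_to_J {w w' : List (V × Bool)} (h : Moves G w w') :
    ∃ n n', Relation.ReflTransGen (DelS G) w n ∧ Relation.ReflTransGen (DelS G) w' n' ∧
      NoPatW G n ∧ NoPatW G n' ∧ Shuf G n n' := by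
  induction h with
  | rel x y hxy =>
    rcases hxy with hs | hd | hd
    · obtain ⟨n, hn, hnp⟩ := exists_normal x
      obtain ⟨n', hn', hsh⟩ := l4star hn y
        (shuf_symm (Relation.ReflTransGen.single hs))
      exact ⟨n, n', hn, hn', hnp, noPat_shuf (shuf_symm hsh) hnp, shuf_symm hsh⟩
    · obtain ⟨n, hn, hnp⟩ := exists_normal y
      exact ⟨n, n, Relation.ReflTransGen.head hd hn, hn, hnp, hnp, shuf_refl _⟩
    · obtain ⟨n, hn, hnp⟩ := exists_normal x
      exact ⟨n, n, hn, Relation.ReflTransGen.head hd hn, hnp, hnp, shuf_refl _⟩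
  | refl x =>
    obtain ⟨n, hn, hnp⟩ := exists_normal x
    exact ⟨n, n, hn, hn, hnp, hnp, shuf_refl _⟩
  | symm x y _ ih =>
    obtain ⟨n, n', h1, h2, q1, q2, hs⟩ := ih
    exact ⟨n', n, h2, h1, q2, q1, shuf_symm hs⟩
  | trans x y z _ _ ih1 ih2 =>
    obtain ⟨n1, n2, ha, hb, q1, q2, s12⟩ := ih1
    obtain ⟨n3, n4, hc, hd, q3, q4, s34⟩ := ih2
    have hmid : Shuf G n2 n3 := unf hb q2 hc q3
    exact ⟨n1, n4, ha, hd, q1, q4, shuf_trans s12 (shuf_trans hmid s34)⟩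

/-- Main combinatorial lemma: a pattern-free word has minimal length in its `Moves` class. -/
lemma main_length {w w' : List (V × Bool)} (hnp : NoPatW G w) (h : Moves G w w') :
    w.length ≤ w'.length := by
  obtain ⟨n, n', hn, hn', _, _, hsh⟩ := moves_to_J h
  have hnw : n = w := by
    rcases Relation.ReflTransGen.cases_head hn with h' | ⟨c, hc, _⟩
    · exact h'.symm
    · exact absurd hc (hnp c)
  subst hnw
  have h1 : n'.length ≤ w'.length := rtg_del_length hn'
  have h2 : n.length = n'.length := shuf_length hsh
  omega

end Comb

section GroupPart

variable (G : SimpleGraph V)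

/-- Setoid of words modulo elementary moves. -/
def movesSetoid : Setoid (List (V × Bool)) :=
  ⟨Moves G, Relation.EqvGen.is_equivalence _⟩

/-- Words modulo moves. -/
def QW := Quotient (movesSetoid G)

/-- Class of a word. -/
def mkQ (w : List (V × Bool)) : QW G := Quotient.mk (movesSetoid G) w

variable {G}

lemma mstep_append {w w' : List (V × Bool)} (l r : List (V × Bool)) (h : MStep G w w') :
    MStep G (l ++ w ++ r) (l ++ w' ++ r) := by
  rcases h with ⟨x, a, b, y, hc, rfl, rfl⟩ | ⟨x, a, m, y, hc, rfl, rfl⟩ | hd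
  · exact Or.inl ⟨l ++ x, a, b, y ++ r, hc, by simp, by simp⟩
  · exact Or.inr (Or.inl ⟨l ++ x, a, m, y ++ r, hc, by simp, by simp⟩)
  · obtain ⟨x, a, m, y, hc, h1, h2⟩ := hd
    exact Or.inr (Or.inr ⟨l ++ x, a, m, y ++ r, hc, by simp [h1], by simp [h2]⟩)

lemma moves_append {w w' : List (V × Bool)} (l r : List (V × Bool)) (h : Moves G w w') :
    Moves G (l ++ w ++ r) (l ++ w' ++ r) := by
  induction h with
  | rel x y hxy => exact Relation.EqvGen.rel _ _ (mstep_append l r hxy)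
  | refl x => exact Relation.EqvGen.refl _
  | symm x y _ ih => exact Relation.EqvGen.symm _ _ ih
  | trans x y z _ _ ih1 ih2 => exact Relation.EqvGen.trans _ _ _ ih1 ih2

lemma moves_append_both {a b c d : List (V × Bool)} (h1 : Moves G a b) (h2 : Moves G c d) :
    Moves G (a ++ c) (b ++ d) := by
  have step1 : Moves G (a ++ c) (b ++ c) := by simpa using moves_append [] c h1
  have step2 : Moves G (b ++ c) (b ++ d) := by simpa using moves_append b [] h2
  exact Relation.EqvGen.trans _ _ _ step1 step2

/-- Formal inverse of a word. -/
def wInv (w : List (V × Bool)) : List (V × Bool) := (w.map inv1).reverse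

@[simp] lemma wInv_nil : wInv ([] : List (V × Bool)) = [] := rfl

@[simp] lemma wInv_append (a b : List (V × Bool)) : wInv (a ++ b) = wInv b ++ wInv a := by
  simp [wInv]

@[simp] lemma wInv_cons (p : V × Bool) (w : List (V × Bool)) :
    wInv (p :: w) = wInv w ++ [inv1 p] := by simp [wInv]

lemma mstep_wInv {w w' : List (V × Bool)} (h : MStep G w w') :
    MStep G (wInv w) (wInv w') := by
  rcases h with ⟨x, a, b, y, hc, rfl, rfl⟩ | ⟨x, a, m, y, hc, rfl, rfl⟩ | hd
  · refine Or.inl ⟨wInv y, inv1 b, inv1 a, wInv x, ?_, by simp [wInv], by simp [wInv]⟩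
    exact cmm_congr_right (by simp) (cmm_congr_left (by simp) (cmm_symm hc))
  · refine Or.inr (Or.inl ⟨wInv y, a, wInv m, wInv x, ?_, ?_, by simp⟩)
    · intro p hp
      simp only [wInv, List.mem_reverse, List.mem_map] at hp
      obtain ⟨q, hq, rfl⟩ := hp
      exact cmm_congr_right (by simp) (hc q hq)
    · simp [wInv]
  · obtain ⟨x, a, m, y, hc, h1, h2⟩ := hd
    subst h1; subst h2
    refine Or.inr (Or.inr ⟨wInv y, a, wInv m, wInv x, ?_, ?_, by simp⟩)
    · intro p hp
      simp only [wInv, List.mem_reverse, List.mem_map] at hp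
      obtain ⟨q, hq, rfl⟩ := hp
      exact cmm_congr_right (by simp) (hc q hq)
    · simp [wInv]

lemma moves_wInv {w w' : List (V × Bool)} (h : Moves G w w') :
    Moves G (wInv w) (wInv w') := by
  induction h with
  | rel x y hxy => exact Relation.EqvGen.rel _ _ (mstep_wInv hxy)
  | refl x => exact Relation.EqvGen.refl _
  | symm x y _ ih => exact Relation.EqvGen.symm _ _ ih
  | trans x y z _ _ ih1 ih2 => exact Relation.EqvGen.trans _ _ _ ih1 ih2

lemma moves_wInv_mul (w : List (V × Bool)) : Moves G (wInv w ++ w) [] := by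
  induction w with
  | nil => exact Relation.EqvGen.refl _
  | cons a w ih =>
    have step : MStep G (wInv (a :: w) ++ (a :: w)) (wInv w ++ w) := by
      refine Or.inr (Or.inl ⟨wInv w, inv1 a, [], w, by simp, ?_, by simp⟩)
      simp
    exact Relation.EqvGen.trans _ _ _ (Relation.EqvGen.rel _ _ step) ih

instance instGroupQW : Group (QW G) where
  mul := Quotient.map₂ (· ++ ·) (fun _ _ h1 _ _ h2 => moves_append_both h1 h2)
  one := mkQ G []
  inv := Quotient.map wInv (fun _ _ h => moves_wInv h)
  mul_assoc := by
    rintro ⟨a⟩ ⟨b⟩ ⟨c⟩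
    show mkQ G ((a ++ b) ++ c) = mkQ G (a ++ (b ++ c))
    rw [List.append_assoc]
  one_mul := by
    rintro ⟨a⟩
    show mkQ G ([] ++ a) = mkQ G a
    rw [List.nil_append]
  mul_one := by
    rintro ⟨a⟩
    show mkQ G (a ++ []) = mkQ G a
    rw [List.append_nil]
  inv_mul_cancel := by
    rintro ⟨a⟩
    show mkQ G (wInv a ++ a) = mkQ G []
    exact Quotient.sound (moves_wInv_mul a)

lemma mkQ_mul (a b : List (V × Bool)) : mkQ G a * mkQ G b = mkQ G (a ++ b) := rfl

lemma mkQ_inv (a : List (V × Bool)) : (mkQ G a)⁻¹ = mkQ G (wInv a) := rfl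

lemma relators_killed :
    ∀ r ∈ raagRels G, FreeGroup.lift (fun v => mkQ G [(v, true)]) r = 1 := by
  rintro r ⟨u, v, hadj, rfl⟩
  simp only [map_mul, map_inv, FreeGroup.lift_apply_of]
  rw [mkQ_inv, mkQ_inv, mkQ_mul, mkQ_mul, mkQ_mul]
  show mkQ G ([(u, true)] ++ [(v, true)] ++ wInv [(u, true)] ++ wInv [(v, true)]) = mkQ G []
  apply Quotient.sound
  have s1 : MStep G ([(u, true), (v, true), (u, false), (v, false)])
      ([(v, true), (v, false)]) := by
    refine Or.inr (Or.inl ⟨[], (u, true), [(v, true)], [(v, false)], ?_, rfl, rfl⟩)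
    intro p hp
    simp only [List.mem_singleton] at hp
    subst hp
    exact Or.inr hadj
  have s2 : MStep G ([(v, true), (v, false)]) [] :=
    Or.inr (Or.inl ⟨[], (v, true), [], [], by simp, rfl, rfl⟩)
  show Moves G ([(u, true)] ++ [(v, true)] ++ wInv [(u, true)] ++ wInv [(v, true)]) []
  have e : [(u, true)] ++ [(v, true)] ++ wInv [(u, true)] ++ wInv [(v, true)]
      = [(u, true), (v, true), (u, false), (v, false)] := rfl
  rw [e]
  exact Relation.EqvGen.trans _ _ _ (Relation.EqvGen.rel _ _ s1) (Relation.EqvGen.rel _ _ s2)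

variable (G)

/-- The canonical homomorphism from the RAAG to words modulo moves. -/
noncomputable def toQW : RAAG G →* QW G :=
  PresentedGroup.toGroup (f := fun v => mkQ G [(v, true)]) relators_killed

variable {G}

lemma toQW_of (v : V) : toQW G (raagOf G v) = mkQ G [(v, true)] :=
  PresentedGroup.toGroup.of relators_killed

lemma toQW_word (w : List (V × Bool)) : toQW G (raagWord G w) = mkQ G w := by
  induction w with
  | nil =>
    have h0 : raagWord G [] = 1 := rfl
    rw [h0, map_one]
    rfl
  | cons p w ih =>
    obtain ⟨v, b⟩ := p
    have h1 : raagWord G ((v, b) :: w)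
        = (if b then raagOf G v else (raagOf G v)⁻¹) * raagWord G w := by
      simp [raagWord]
    rw [h1, map_mul, ih]
    cases b
    · rw [if_neg (by simp)]
      rw [map_inv, toQW_of, mkQ_inv, mkQ_mul]
      rfl
    · rw [if_pos (by simp)]
      rw [toQW_of, mkQ_mul]
      rfl

lemma word_eq_moves {w w' : List (V × Bool)} (h : raagWord G w = raagWord G w') :
    Moves G w w' := by
  have h2 := congrArg (toQW G) h
  rw [toQW_word, toQW_word] at h2
  exact Quotient.exact h2

end GroupPart


section Final

variable {G : SimpleGraph V}

lemma raag_commute_of_adj {u v : V} (h : G.Adj u v) :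
    Commute (raagOf G u) (raagOf G v) := by
  have key : (PresentedGroup.mk (raagRels G))
      (FreeGroup.of u * FreeGroup.of v * (FreeGroup.of u)⁻¹ * (FreeGroup.of v)⁻¹) = 1 :=
    (QuotientGroup.eq_one_iff _).mpr
      (Subgroup.subset_normalClosure ⟨u, v, h, rfl⟩)
  have key2 : raagOf G u * raagOf G v * (raagOf G u)⁻¹ * (raagOf G v)⁻¹ = 1 := by
    simp [map_mul, map_inv, raagOf, PresentedGroup.of] at key
    exact key
  have key3 : raagOf G u * raagOf G v = raagOf G v * raagOf G u := by
    rw [mul_inv_eq_one, mul_inv_eq_iff_eq_mul] at key2; exact key2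
  exact key3

lemma raagWord_append (a b : List (V × Bool)) :
    raagWord G (a ++ b) = raagWord G a * raagWord G b := by
  simp [raagWord]

lemma raagWord_singleton (p : V × Bool) :
    raagWord G [p] = if p.2 then raagOf G p.1 else (raagOf G p.1)⁻¹ := by
  simp [raagWord]

lemma pattern_collapse {v : V} {ε : Bool} {w₁ x w₂ : List (V × Bool)}
    (hx : ∀ p ∈ x, Commute (raagOf G v) (raagOf G p.1)) :
    raagWord G (w₁ ++ [(v, ε)] ++ x ++ [(v, !ε)] ++ w₂) = raagWord G (w₁ ++ x ++ w₂) := by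
  have hbase : Commute (raagOf G v) (raagWord G x) := by
    apply Commute.list_prod_right
    intro y hy
    simp only [List.mem_map] at hy
    obtain ⟨p, hp, rfl⟩ := hy
    by_cases hb : p.2
    · simpa [hb] using hx p hp
    · simp only [hb, if_false, Bool.false_eq_true]
      exact (hx p hp).inv_right
  have key : raagWord G [(v, ε)] * raagWord G x * raagWord G [(v, !ε)] = raagWord G x := by
    cases ε
    · rw [raagWord_singleton, raagWord_singleton]
      simp only [Bool.not_false, if_pos, if_neg, Bool.false_eq_true, if_false, if_true]
      rw [hbase.inv_left.eq]
      exact inv_mul_cancel_right _ _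
    · rw [raagWord_singleton, raagWord_singleton]
      simp only [Bool.not_true, if_pos, if_neg, Bool.false_eq_true, if_false, if_true]
      rw [hbase.eq]
      exact mul_inv_cancel_right _ _
  simp only [raagWord_append, mul_assoc]
  congr 1
  rw [← mul_assoc, ← mul_assoc, key]

end Final

/-- A word `w` in `A(Γ)` is reduced iff it contains no subword of the
form `v^ε x v^{-ε}` where every letter of `x` commutes with `v` in `A(Γ)`. -/
theorem reduced_iff_no_cancellation {V : Type*} [Fintype V] (G : SimpleGraph V)
    (w : List (V × Bool)) :
    IsReducedWord G w ↔
      ¬ ∃ (v : V) (ε : Bool) (w₁ x w₂ : List (V × Bool)),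
        w = w₁ ++ [(v, ε)] ++ x ++ [(v, !ε)] ++ w₂ ∧
        ∀ p ∈ x, Commute (raagOf G v) (raagOf G p.1) := by
  constructor
  · rintro hred ⟨v, ε, w₁, x, w₂, hw, hcomm⟩
    have heq : raagWord G (w₁ ++ x ++ w₂) = raagWord G w := by
      rw [hw, pattern_collapse hcomm]
    have hle := hred _ heq
    rw [hw] at hle
    simp only [List.length_append, List.length_cons, List.length_nil] at hle
    omega
  · intro hnopat w' hw'
    have hnp : NoPatW G w := by
      intro d hd
      obtain ⟨x, a, m, y, hc, hww, _⟩ := hd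
      apply hnopat
      refine ⟨a.1, a.2, x, m, y, ?_, ?_⟩
      · simpa [inv1] using hww
      · intro p hp
        rcases hc p hp with h1 | h1
        · rw [h1]
        · exact raag_commute_of_adj h1
    exact main_length hnp (Relation.EqvGen.symm _ _ (word_eq_moves hw'))

end Paper
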